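/- The policy π* defined by π*_h(a|s) = π_ref(a|s,h)·exp( (Q_h*(s,a) − V_h*(s)) / β ) — where V_T*(s) = R(s), Q_h*(s,a) = V_{h+1}*(f(s,a)), and V_h*(s) = β·log( Σ_{a∈A} π_ref(a|s,h)·exp(Q_h*(s,a)/β) ) — is a well-defined policy (each π*_h(·|s) is a probability distribution), its support at each state is contained in the support of π_ref(·|s,h), and it attains the optimal KL-regularized value: J_β(π*) = V_0*(s_0). -/

import Mathlib

noncomputable def KLdiv {A : Type*} [Fintype A] (p q : A → ℝ) : ℝ :=
  ∑ a, p a * Real.log (p a / q a)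

def trajState {S A : Type*} (f : S → A → S) (s0 : S) (T : ℕ) (as : Fin T → A) :
    ℕ → S
  | 0 => s0
  | h + 1 =>
      if hh : h < T then f (trajState f s0 T as h) (as ⟨h, hh⟩)
      else trajState f s0 T as h

noncomputable def Jreg {S A : Type*} [Fintype A] (f : S → A → S) (s0 : S)
    (R : S → ℝ) (T : ℕ) (β : ℝ) (p pref : ℕ → S → A → ℝ) : ℝ :=
  ∑ as : Fin T → A,
    (∏ h : Fin T, p h.val (trajState f s0 T as h.val) (as h)) *
      (R (trajState f s0 T as T) -
        β * ∑ h : Fin T,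
          KLdiv (p h.val (trajState f s0 T as h.val))
                (pref h.val (trajState f s0 T as h.val)))

section Aux
variable {S A : Type*} [Fintype A]

lemma trajState_succ (f : S → A → S) (s0 : S) (T : ℕ) (as : Fin T → A) (h : ℕ)
    (hh : h < T) :
    trajState f s0 T as (h+1) = f (trajState f s0 T as h) (as ⟨h, hh⟩) := by
  simp [trajState, hh]

lemma trajState_cons (f : S → A → S) (s0 : S) (n : ℕ) (a0 : A) (rest : Fin n → A) :
    ∀ h : ℕ, h ≤ n →
      trajState f s0 (n+1) (Fin.cons a0 rest) (h+1) = trajState f (f s0 a0) n rest h := by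
  intro h
  induction h with
  | zero =>
    intro _
    rw [trajState_succ f s0 (n+1) _ 0 (by omega)]
    rfl
  | succ k ih =>
    intro hk
    have hk' : k < n := by omega
    rw [trajState_succ f s0 (n+1) _ (k+1) (by omega),
      trajState_succ f (f s0 a0) n rest k hk', ih (by omega)]
    congr 1

lemma prod_cons (f : S → A → S) (s0 : S) (n : ℕ) (P : ℕ → S → A → ℝ)
    (a0 : A) (rest : Fin n → A) :
    (∏ h : Fin (n+1), P h.val (trajState f s0 (n+1) (Fin.cons a0 rest) h.val)
        ((Fin.cons a0 rest : Fin (n+1) → A) h)) =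
    P 0 s0 a0 * ∏ h : Fin n, P (h.val+1) (trajState f (f s0 a0) n rest h.val) (rest h) := by
  rw [Fin.prod_univ_succ]
  congr 1
  refine Finset.prod_congr rfl fun h _ => ?_
  rw [Fin.cons_succ]
  congr 1
  exact trajState_cons f s0 n a0 rest h.val (le_of_lt h.isLt)

lemma klsum_cons (f : S → A → S) (s0 : S) (n : ℕ) (P Q : ℕ → S → A → ℝ)
    (a0 : A) (rest : Fin n → A) :
    (∑ h : Fin (n+1), KLdiv (P h.val (trajState f s0 (n+1) (Fin.cons a0 rest) h.val))
        (Q h.val (trajState f s0 (n+1) (Fin.cons a0 rest) h.val))) =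
    KLdiv (P 0 s0) (Q 0 s0) +
      ∑ h : Fin n, KLdiv (P (h.val+1) (trajState f (f s0 a0) n rest h.val))
        (Q (h.val+1) (trajState f (f s0 a0) n rest h.val)) := by
  rw [Fin.sum_univ_succ]
  congr 1
  refine Finset.sum_congr rfl fun h _ => ?_
  rw [Fin.val_succ, trajState_cons f s0 n a0 rest h.val (le_of_lt h.isLt)]

lemma Jreg_succ (f : S → A → S) (s0 : S) (R : S → ℝ) (n : ℕ) (β : ℝ)
    (p q : ℕ → S → A → ℝ) :
    Jreg f s0 R (n+1) β p q =
      ∑ a0, p 0 s0 a0 *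
        (Jreg f (f s0 a0) R n β (fun h => p (h+1)) (fun h => q (h+1))
          - β * KLdiv (p 0 s0) (q 0 s0) *
            ∑ as : Fin n → A, ∏ h : Fin n,
              p (h.val+1) (trajState f (f s0 a0) n as h.val) (as h)) := by
  rw [Jreg, ← Equiv.sum_comp (Fin.consEquiv fun _ => A), Fintype.sum_prod_type]
  refine Finset.sum_congr rfl fun a0 _ => ?_
  have key : ∀ rest : Fin n → A,
      ((Fin.consEquiv fun _ => A) (a0, rest) = Fin.cons a0 rest) := fun _ => rfl
  simp only [key]
  have e1 : ∀ rest : Fin n → A,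
      trajState f s0 (n+1) (Fin.cons a0 rest) (n+1) = trajState f (f s0 a0) n rest n :=
    fun rest => trajState_cons f s0 n a0 rest n le_rfl
  simp only [prod_cons, klsum_cons, e1]
  rw [Jreg]
  rw [Finset.sum_congr rfl (fun rest _ => show
      (p 0 s0 a0 * ∏ h : Fin n, p (h.val+1) (trajState f (f s0 a0) n rest h.val) (rest h)) *
        (R (trajState f (f s0 a0) n rest n) -
          β * (KLdiv (p 0 s0) (q 0 s0) +
            ∑ h : Fin n, KLdiv (p (h.val+1) (trajState f (f s0 a0) n rest h.val))
              (q (h.val+1) (trajState f (f s0 a0) n rest h.val)))) =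
      p 0 s0 a0 * ((∏ h : Fin n, p (h.val+1) (trajState f (f s0 a0) n rest h.val) (rest h)) *
        (R (trajState f (f s0 a0) n rest n) -
          β * ∑ h : Fin n, KLdiv (p (h.val+1) (trajState f (f s0 a0) n rest h.val))
            (q (h.val+1) (trajState f (f s0 a0) n rest h.val)))) -
      (p 0 s0 a0 * (β * KLdiv (p 0 s0) (q 0 s0))) *
        ∏ h : Fin n, p (h.val+1) (trajState f (f s0 a0) n rest h.val) (rest h)
      from by ring),
    Finset.sum_sub_distrib, ← Finset.mul_sum, ← Finset.mul_sum]
  ring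

lemma traj_mass (f : S → A → S) : ∀ (n : ℕ) (P : ℕ → S → A → ℝ),
    (∀ h < n, ∀ s, ∑ a, P h s a = 1) → ∀ s : S,
    (∑ as : Fin n → A, ∏ h : Fin n, P h.val (trajState f s n as h.val) (as h)) = 1 := by
  intro n
  induction n with
  | zero => intro P _ s; simp
  | succ n ih =>
    intro P hP s
    rw [← Equiv.sum_comp (Fin.consEquiv fun _ => A), Fintype.sum_prod_type]
    have key : ∀ (a0 : A) (rest : Fin n → A),
        ((Fin.consEquiv fun _ => A) (a0, rest) = Fin.cons a0 rest) := fun _ _ => rfl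
    simp only [key, prod_cons]
    have h2 : ∀ a0 : A,
        (∑ rest : Fin n → A, ∏ h : Fin n,
          P (h.val+1) (trajState f (f s a0) n rest h.val) (rest h)) = 1 :=
      fun a0 => ih (fun h => P (h+1)) (fun h hh s' => hP (h+1) (by omega) s') (f s a0)
    rw [show (∑ a0, ∑ rest : Fin n → A, P 0 s a0 * ∏ h : Fin n,
          P (h.val+1) (trajState f (f s a0) n rest h.val) (rest h)) =
        ∑ a0, P 0 s a0 from ?_]
    · exact hP 0 (by omega) s
    · refine Finset.sum_congr rfl fun a0 _ => ?_
      rw [← Finset.mul_sum, h2 a0, mul_one]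

end Aux
/-- **Optimality of the exponentially tilted policy.**
The policy `π*` with `π*_h(a|s) = π_ref(a|s,h) * exp ((Q_h*(s,a) − V_h*(s))/β)`
— where `V_T*(s) = R(s)`, `Q_h*(s,a) = V_{h+1}*(f(s,a))`, and
`V_h*(s) = β log (∑ a, π_ref(a|s,h) exp (Q_h*(s,a)/β))` for `h < T` —
is a well-defined policy (each `π*_h(·|s)` is a probability distribution),
its support at each state is contained in the support of `π_ref(·|s,h)`,
and it attains the optimal KL-regularized value: `J_β(π*) = V₀*(s₀)`. -/
theorem klreg_tilted_policy_optimal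
    {S A : Type*} [Fintype S] [Fintype A] [Nonempty A]
    (f : S → A → S) (T : ℕ) (hT : 1 ≤ T) (R : S → ℝ) (s0 : S)
    (β : ℝ) (hβ : 0 < β)
    (pref : ℕ → S → A → ℝ)
    (hpref : ∀ h < T, ∀ s, (∀ a, 0 ≤ pref h s a) ∧ ∑ a, pref h s a = 1)
    (Vstar : ℕ → S → ℝ)
    (hVT : ∀ s, Vstar T s = R s)
    (hVrec : ∀ h < T, ∀ s,
      Vstar h s =
        β * Real.log (∑ a, pref h s a * Real.exp (Vstar (h + 1) (f s a) / β)))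
    (pstar : ℕ → S → A → ℝ)
    (hpstar : ∀ h < T, ∀ s a,
      pstar h s a =
        pref h s a * Real.exp ((Vstar (h + 1) (f s a) - Vstar h s) / β)) :
    (∀ h < T, ∀ s, (∀ a, 0 ≤ pstar h s a) ∧ ∑ a, pstar h s a = 1) ∧
    (∀ h < T, ∀ s a, pref h s a = 0 → pstar h s a = 0) ∧
    Jreg f s0 R T β pstar pref = Vstar 0 s0 := by
  have hnonneg : ∀ h < T, ∀ s, ∀ a : A, 0 ≤ pstar h s a := by
    intro h hh s a
    rw [hpstar h hh s a]
    exact mul_nonneg ((hpref h hh s).1 a) (Real.exp_pos _).le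
  have hsumpos : ∀ h < T, ∀ s,
      0 < ∑ a, pref h s a * Real.exp (Vstar (h+1) (f s a) / β) := by
    intro h hh s
    obtain ⟨hnn, hsum⟩ := hpref h hh s
    have hex : ∃ a, 0 < pref h s a := by
      by_contra hc
      push_neg at hc
      have hz : ∀ a, pref h s a = 0 := fun a => le_antisymm (hc a) (hnn a)
      simp [hz] at hsum
    obtain ⟨a, ha⟩ := hex
    exact Finset.sum_pos' (fun b _ => mul_nonneg (hnn b) (Real.exp_pos _).le)
      ⟨a, Finset.mem_univ a, mul_pos ha (Real.exp_pos _)⟩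
  have hVdiv : ∀ h < T, ∀ s,
      Real.exp (Vstar h s / β) = ∑ a, pref h s a * Real.exp (Vstar (h+1) (f s a) / β) := by
    intro h hh s
    rw [hVrec h hh s, mul_div_cancel_left₀ _ (ne_of_gt hβ),
      Real.exp_log (hsumpos h hh s)]
  have hnorm : ∀ h < T, ∀ s, ∑ a, pstar h s a = 1 := by
    intro h hh s
    have h1 : ∀ a : A, pstar h s a =
        pref h s a * Real.exp (Vstar (h+1) (f s a) / β) / Real.exp (Vstar h s / β) := by
      intro a
      rw [hpstar h hh s a, sub_div, Real.exp_sub, mul_div_assoc]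
    rw [Finset.sum_congr rfl (fun a _ => h1 a), ← Finset.sum_div, ← hVdiv h hh s,
      div_self (ne_of_gt (Real.exp_pos _))]
  have hsupp : ∀ h < T, ∀ s a, pref h s a = 0 → pstar h s a = 0 := by
    intro h hh s a ha
    rw [hpstar h hh s a, ha, zero_mul]
  have hKL : ∀ h < T, ∀ s, β * KLdiv (pstar h s) (pref h s) =
      (∑ a, pstar h s a * Vstar (h+1) (f s a)) - Vstar h s := by
    intro h hh s
    have hterm : ∀ a : A, pstar h s a * Real.log (pstar h s a / pref h s a) =
        pstar h s a * ((Vstar (h+1) (f s a) - Vstar h s) / β) := by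
      intro a
      rcases eq_or_lt_of_le ((hpref h hh s).1 a) with h0 | h0
      · have : pstar h s a = 0 := hsupp h hh s a h0.symm
        rw [this, zero_mul, zero_mul]
      · congr 1
        rw [hpstar h hh s a, mul_comm, mul_div_assoc, div_self (ne_of_gt h0),
          mul_one, Real.log_exp]
    rw [KLdiv, Finset.sum_congr rfl (fun a _ => hterm a)]
    rw [Finset.mul_sum]
    rw [Finset.sum_congr rfl (fun a _ => show
        β * (pstar h s a * ((Vstar (h+1) (f s a) - Vstar h s) / β)) =
        pstar h s a * Vstar (h+1) (f s a) - pstar h s a * Vstar h s from by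
      field_simp)]
    rw [Finset.sum_sub_distrib, ← Finset.sum_mul, hnorm h hh s, one_mul]
  have main : ∀ n k : ℕ, n + k = T → ∀ s : S,
      Jreg f s R n β (fun h => pstar (h + k)) (fun h => pref (h + k)) = Vstar k s := by
    intro n
    induction n with
    | zero =>
      intro k hk s
      have hkT : k = T := by omega
      subst hkT
      simp [Jreg, hVT, trajState]
    | succ n ih =>
      intro k hk s
      have hkT : k < T := by omega
      rw [Jreg_succ]
      have e1 : (fun h => pstar (h + 1 + k)) = (fun h => pstar (h + (k + 1))) := by
        funext h; rw [Nat.add_assoc, Nat.add_comm 1 k]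
      have e2 : (fun h => pref (h + 1 + k)) = (fun h => pref (h + (k + 1))) := by
        funext h; rw [Nat.add_assoc, Nat.add_comm 1 k]
      simp only [zero_add, e1, e2]
      have hmass : ∀ a0 : A,
          (∑ as : Fin n → A, ∏ h : Fin n,
            pstar (h.val + 1 + k) (trajState f (f s a0) n as h.val) (as h)) = 1 := by
        intro a0
        exact traj_mass f n (fun h => pstar (h + 1 + k))
          (fun h hh s' => hnorm (h + 1 + k) (by omega) s') (f s a0)
      have step : ∀ a0 ∈ (Finset.univ : Finset A),
          pstar k s a0 *
            (Jreg f (f s a0) R n β (fun h => pstar (h + (k+1))) (fun h => pref (h + (k+1)))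
              - β * KLdiv (pstar k s) (pref k s) *
                ∑ as : Fin n → A, ∏ h : Fin n,
                  pstar (h.val + 1 + k) (trajState f (f s a0) n as h.val) (as h)) =
          pstar k s a0 * Vstar (k+1) (f s a0)
            - pstar k s a0 * (β * KLdiv (pstar k s) (pref k s)) := by
        intro a0 _
        rw [ih (k+1) (by omega) (f s a0), hmass a0, mul_one]
        ring
      rw [Finset.sum_congr rfl step, Finset.sum_sub_distrib, ← Finset.sum_mul,
        hnorm k hkT s, one_mul, hKL k hkT s]
      ring
  refine ⟨fun h hh s => ⟨hnonneg h hh s, hnorm h hh s⟩, hsupp, ?_⟩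
  have := main T 0 (by omega) s0
  simpa using this
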